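/- arXiv:2505.15654 — 5 statements merged into one kernel-verified Lean document; each statement's English description precedes it below -/
import Mathlib

section
/- Let Ω₁,...,Ω_Δ be finite probability spaces and Ω = Ω₁ × ... × Ω_Δ their product. Let h : Ω → {0,1,...,Δ} be a function and δ₁,...,δ_Δ ∈ [0,1/2]. For each i ∈ {1,...,Δ}, define Θᵢ as the set of y ∈ Ωᵢ such that Pr_{z∼Ω}[h(z) = i | zᵢ = y] ≥ 1 - δᵢ, and let θᵢ = Pr_{y∼Ωᵢ}[y ∈ Θᵢ]. Then Σᵢ θᵢ ≤ 1/(1 - maxᵢ δᵢ) ≤ 2. -/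
/-!
By Fubini, `Pr[h = i]` is the `μ i`-average of the conditional probabilities
`y ↦ Pr[h z = i | z i = y]`, so Markov's inequality gives `(1 - δᵢ) θᵢ ≤ Pr[h = i]`.
The events `{h = i}` are disjoint, hence `∑ (1 - δᵢ) θᵢ ≤ 1`, and `1 - δᵢ ≥ 1 - max δ ≥ 1/2`.
-/

open MeasureTheory Function
open scoped ENNReal

section Pi

variable {ι : Type*} [Fintype ι] [DecidableEq ι] {Ω : ι → Type*} [∀ i, MeasurableSpace (Ω i)]
  (μ : ∀ i, Measure (Ω i)) [∀ i, IsProbabilityMeasure (μ i)]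

theorem lintegral_pi_eq_lintegral_lintegral_update {f : (∀ i, Ω i) → ℝ≥0∞} (hf : Measurable f)
    (i : ι) :
    ∫⁻ z, f z ∂Measure.pi μ = ∫⁻ y, ∫⁻ z, f (update z i y) ∂Measure.pi μ ∂μ i := by
  have hupdate : Measurable fun p : (∀ j, Ω j) × Ω i ↦ f (update p.1 i p.2) :=
    hf.comp (measurable_update' (a := i))
  have hmarginal : Measurable (∫⋯∫⁻_{i}, f ∂μ) := hf.lmarginal μ
  have hidem : ∫⋯∫⁻_{i}, f ∂μ = ∫⋯∫⁻_{i}, (∫⋯∫⁻_{i}, f ∂μ) ∂μ := by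
    ext x
    rw [lmarginal_singleton (f := ∫⋯∫⁻_{i}, f ∂μ)]
    simp only [lmarginal_update_of_mem μ (Finset.mem_singleton_self i), lintegral_const,
      measure_univ, mul_one]
  calc ∫⁻ z, f z ∂Measure.pi μ = ∫⁻ z, (∫⋯∫⁻_{i}, f ∂μ) z ∂Measure.pi μ :=
        lintegral_eq_of_lmarginal_eq {i} hf hmarginal hidem
    _ = ∫⁻ z, ∫⁻ y, f (update z i y) ∂μ i ∂Measure.pi μ := by rw [lmarginal_singleton]
    _ = ∫⁻ y, ∫⁻ z, f (update z i y) ∂Measure.pi μ ∂μ i :=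
        lintegral_lintegral_swap hupdate.aemeasurable

theorem measure_pi_eq_lintegral_measure_update {A : Set (∀ i, Ω i)} (hA : MeasurableSet A)
    (i : ι) :
    Measure.pi μ A = ∫⁻ y, Measure.pi μ ((update · i y) ⁻¹' A) ∂μ i := by
  rw [← lintegral_indicator_one hA,
    lintegral_pi_eq_lintegral_lintegral_update μ (measurable_one.indicator hA)]
  refine lintegral_congr fun y ↦ ?_
  rw [← lintegral_indicator_one (hA.preimage measurable_update_left)]
  rfl

theorem mul_measureReal_setOf_le_measureReal_update_le {A : Set (∀ i, Ω i)}
    (hA : MeasurableSet A) (i : ι) (c : ℝ) :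
    c * (μ i).real {y | c ≤ (Measure.pi μ).real ((update · i y) ⁻¹' A)} ≤
      (Measure.pi μ).real A := by
  have hsection : Measurable fun y ↦ Measure.pi μ ((update · i y) ⁻¹' A) :=
    measurable_measure_prodMk_right (hA.preimage (measurable_update' (a := i)))
  have hlintegral := measure_pi_eq_lintegral_measure_update μ hA i
  have hintegral : (Measure.pi μ).real A =
      ∫ y, (Measure.pi μ).real ((update · i y) ⁻¹' A) ∂μ i := by
    rw [measureReal_def, hlintegral,
      ← integral_toReal hsection.aemeasurable (.of_forall fun _ ↦ measure_lt_top _ _)]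
    rfl
  rw [hintegral]
  refine mul_meas_ge_le_integral_of_nonneg (.of_forall fun _ ↦ measureReal_nonneg) ?_ c
  exact integrable_toReal_of_lintegral_ne_top hsection.aemeasurable
    (hlintegral ▸ measure_ne_top _ _)

end Pi

theorem sum_measureReal_setOf_eq_some_le_one {X ι : Type*} [MeasurableSpace X] [Fintype ι]
    (P : Measure X) [IsZeroOrProbabilityMeasure P] {h : X → Option ι}
    (hh : ∀ i, MeasurableSet {x | h x = some i}) :
    ∑ i, P.real {x | h x = some i} ≤ 1 := by
  have hdisj : Pairwise (Disjoint on fun i ↦ {x | h x = some i}) := fun i j hij ↦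
    Set.disjoint_left.2 fun x hi hj ↦ hij (Option.some_injective _ (hi.symm.trans hj))
  rw [← measureReal_iUnion_fintype hdisj hh]
  exact measureReal_le_one

theorem sum_le_one_div_of_sum_mul_le_one {ι : Type*} [Fintype ι] {θ δ : ι → ℝ} {D : ℝ}
    (hθ : ∀ i, 0 ≤ θ i) (hδ : ∀ i, δ i ≤ D) (hD : D < 1) (h : ∑ i, (1 - δ i) * θ i ≤ 1) :
    ∑ i, θ i ≤ 1 / (1 - D) := by
  rw [le_div_iff₀ (by linarith), Finset.sum_mul]
  refine le_trans (Finset.sum_le_sum fun i _ ↦ ?_) h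
  rw [mul_comm]
  exact mul_le_mul_of_nonneg_right (by linarith [hδ i]) (hθ i)

theorem crude_direction_bound_general {Δ : ℕ}
    (Ω : Fin Δ → Type*) [∀ i, Fintype (Ω i)]
    [∀ i, MeasurableSpace (Ω i)] [∀ i, MeasurableSingletonClass (Ω i)]
    (μ : ∀ i, Measure (Ω i)) [∀ i, IsProbabilityMeasure (μ i)]
    (h : (∀ i, Ω i) → Option (Fin Δ))
    (δv : Fin Δ → ℝ) (hδ : ∀ i, δv i ∈ Set.Icc (0 : ℝ) (1 / 2)) :
    (∑ i, ((μ i) {y | 1 - δv i ≤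
        ((Measure.pi μ) {z | h (Function.update z i y) = some i}).toReal}).toReal)
      ≤ 1 / (1 - ⨆ i, δv i) ∧ 1 / (1 - ⨆ i, δv i) ≤ 2 := by
  simp only [← measureReal_def]
  set D := ⨆ i, δv i
  have hδD : ∀ i, δv i ≤ D := le_ciSup (Set.finite_range δv).bddAbove
  have hD : D ≤ 1 / 2 := Real.iSup_le (fun i ↦ (hδ i).2) (by norm_num)
  have hmarkov := fun i ↦ mul_measureReal_setOf_le_measureReal_update_le μ
    (MeasurableSet.of_discrete (s := {z | h z = some i})) i (1 - δv i)
  have htotal := sum_measureReal_setOf_eq_some_le_one (Measure.pi μ) (h := h)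
    fun _ ↦ MeasurableSet.of_discrete
  refine ⟨sum_le_one_div_of_sum_mul_le_one (fun _ ↦ measureReal_nonneg) hδD (by linarith) ?_,
    by rw [div_le_iff₀ (by linarith)]; linarith⟩
  exact (Finset.sum_le_sum fun i _ ↦ hmarkov i).trans htotal

theorem crude_direction_bound {Δ : ℕ} (hΔ : 0 < Δ)
    (Ω : Fin Δ → Type*) [∀ i, Fintype (Ω i)]
    [∀ i, MeasurableSpace (Ω i)] [∀ i, MeasurableSingletonClass (Ω i)]
    (μ : ∀ i, Measure (Ω i)) [∀ i, IsProbabilityMeasure (μ i)]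
    (h : (∀ i, Ω i) → Option (Fin Δ))
    (δv : Fin Δ → ℝ) (hδ : ∀ i, δv i ∈ Set.Icc (0 : ℝ) (1 / 2)) :
    (∑ i, ((μ i) {y | 1 - δv i ≤
        ((Measure.pi μ) {z | h (Function.update z i y) = some i}).toReal}).toReal)
      ≤ 1 / (1 - ⨆ i, δv i) ∧ 1 / (1 - ⨆ i, δv i) ≤ 2 :=
  crude_direction_bound_general Ω μ h δv hδ
end

section
/- Let n be an even positive integer, S a subset of vertices of K_n with |S| = k, M a uniformly random perfect matching of K_n, and X = |M ∩ E(K_n[S])|. Let f(t) = Pr[X = t]. Then for every integer t ≥ 1 in the support, f(t-1)·f(t+1) ≤ (t/(t+1))·f(t)², i.e., X is ultra log-concave. -/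
/-- The set of perfect matchings of the complete graph `K_n`, encoded as
fixed-point-free involutions of `Fin n`. -/
def perfectMatchings (n : ℕ) : Finset (Equiv.Perm (Fin n)) :=
  Finset.univ.filter fun σ => ∀ x, σ (σ x) = x ∧ σ x ≠ x

/-- The probability, over a uniformly random perfect matching of `K_n`, that exactly `t`
matching edges have both endpoints in `S`. -/
noncomputable def pmProb (n : ℕ) (S : Finset (Fin n)) (t : ℕ) : ℝ :=
  (((perfectMatchings n).filter fun σ =>
      (S.filter fun x => σ x ∈ S).card = 2 * t).card : ℝ) /
    ((perfectMatchings n).card : ℝ)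

/-!
Write `A_s` for the number of perfect matchings with exactly `s` edges inside `S`, and `k = |S|`.
If `{x, σ x}` is an edge inside `S` and `{y, σ y}` an edge inside `Sᶜ`, replacing them by
`{x, y}` and `{σ x, σ y}` removes one inner edge; conversely two vertices `a ≠ b` of `S` matched
outside `S` can be joined. This switch is a bijection of the corresponding pointed matchings, so
`A_{s+1} · 2(s+1) · (n - 2k + 2s + 2) = A_s · (k - 2s)(k - 2s - 1)`.
Dividing these recurrences at `s = t - 1` and `s = t` gives
`(t+1) A_{t-1} A_{t+1} / (t A_t²)
  = [(k-2t)(k-2t-1) / ((k-2t+2)(k-2t+1))] · [(n-2k+2t) / (n-2k+2t+2)] ≤ 1`.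
-/

open Equiv Finset

namespace PerfectMatching

section Switch

variable {α : Type*} [DecidableEq α] (σ : Perm α) (u v : α)

/-- Replace the matching edges `{u, σ u}` and `{v, σ v}` by `{u, v}` and `{σ u, σ v}`. -/
def switch : Perm α := swap (σ u) v * σ * swap (σ u) v

lemma switch_apply (w : α) : switch σ u v w = swap (σ u) v (σ (swap (σ u) v w)) := rfl

variable {σ u v}

lemma switch_apply_left (hu : σ u ≠ u) (huv : u ≠ v) : switch σ u v u = v := by
  rw [switch_apply, swap_apply_of_ne_of_ne hu.symm huv, swap_apply_left]

lemma switch_apply_apply_left (hv : σ v ≠ v) (huv : u ≠ v) : switch σ u v (σ u) = σ v := by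
  have h : σ v ≠ σ u := fun h => huv (σ.injective h).symm
  rw [switch_apply, swap_apply_left, swap_apply_of_ne_of_ne h hv]

lemma switch_apply_of_ne (hinv : Function.Involutive σ) {w : α} (hwu : w ≠ u) (hwv : w ≠ v)
    (hwσu : w ≠ σ u) (hwσv : w ≠ σ v) : switch σ u v w = σ w := by
  have h₁ : σ w ≠ σ u := fun h => hwu (σ.injective h)
  have h₂ : σ w ≠ v := fun h => hwσv (by rw [← h, hinv])
  rw [switch_apply, swap_apply_of_ne_of_ne hwσu hwv, swap_apply_of_ne_of_ne h₁ h₂]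

lemma switch_switch (hu : σ u ≠ u) (huv : u ≠ v) : switch (switch σ u v) u (σ u) = σ := by
  rw [switch, switch_apply_left hu huv, switch, swap_comm v]
  simp only [← mul_assoc, swap_mul_self, one_mul]
  rw [mul_assoc, swap_mul_self, mul_one]

lemma involutive_switch (hinv : Function.Involutive σ) : Function.Involutive (switch σ u v) := by
  intro x
  rw [switch_apply, switch_apply, swap_apply_self, hinv, swap_apply_self]

lemma switch_apply_ne_self (hfix : ∀ x, σ x ≠ x) (x : α) : switch σ u v x ≠ x := by
  intro h
  apply hfix (swap (σ u) v x)
  rw [← swap_apply_self (σ u) v (σ _), ← switch_apply, h]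

end Switch

section Within

variable {α : Type*} [DecidableEq α] (σ : Perm α) (S : Finset α)

def matchedWithin : Finset α := S.filter fun x => σ x ∈ S

def matchedOut : Finset α := S.filter fun x => σ x ∉ S

variable {σ S} in
@[simp]
lemma mem_matchedWithin {x : α} : x ∈ matchedWithin σ S ↔ x ∈ S ∧ σ x ∈ S := mem_filter

variable {σ S} in
@[simp]
lemma mem_matchedOut {x : α} : x ∈ matchedOut σ S ↔ x ∈ S ∧ σ x ∉ S := mem_filter

lemma card_matchedWithin_add_card_matchedOut : #(matchedWithin σ S) + #(matchedOut σ S) = #S :=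
  card_filter_add_card_filter_not _

variable {σ}

lemma card_matchedOut_compl [Fintype α] (hinv : Function.Involutive σ) :
    #(matchedOut σ Sᶜ) = #(matchedOut σ S) :=
  card_nbij' σ σ
    (fun x hx => by simp_all [hinv x])
    (fun x hx => by simp_all [hinv x])
    (fun x _ => hinv x) (fun x _ => hinv x)

/-- Each edge leaving `S` has exactly one endpoint in `Sᶜ`. -/
lemma card_matchedWithin_compl [Fintype α] (hinv : Function.Involutive σ) :
    #(matchedWithin σ Sᶜ) + 2 * #S = Fintype.card α + #(matchedWithin σ S) := by
  have h₁ := card_matchedWithin_add_card_matchedOut σ S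
  have h₂ := card_matchedWithin_add_card_matchedOut σ Sᶜ
  have h₃ := card_add_card_compl S
  have h₄ := card_matchedOut_compl S hinv
  omega

variable {S}

lemma card_matchedWithin_switch_add_two (hinv : Function.Involutive σ) (hfix : ∀ x, σ x ≠ x)
    {x y : α} (hx : x ∈ S) (hσx : σ x ∈ S) (hy : y ∉ S) (hσy : σ y ∉ S) :
    #(matchedWithin (switch σ x y) S) + 2 = #(matchedWithin σ S) := by
  have hxy : x ≠ y := fun h => hy (h ▸ hx)
  have hswitch : matchedWithin (switch σ x y) S = ((matchedWithin σ S).erase x).erase (σ x) := by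
    ext w
    simp only [mem_matchedWithin, mem_erase]
    by_cases hwx : w = x
    · subst hwx
      simp [switch_apply_left (hfix w) hxy, hy]
    by_cases hwσx : w = σ x
    · subst hwσx
      simp [switch_apply_apply_left (hfix y) hxy, hσy]
    by_cases hwS : w ∈ S
    · have hwy : w ≠ y := fun h => hy (h ▸ hwS)
      have hwσy : w ≠ σ y := fun h => hσy (h ▸ hwS)
      simp [switch_apply_of_ne hinv hwx hwy hwσx hwσy, hwx, hwσx]
    · simp [hwS]
  have hx' : x ∈ matchedWithin σ S := mem_matchedWithin.mpr ⟨hx, hσx⟩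
  have hσx' : σ x ∈ (matchedWithin σ S).erase x :=
    mem_erase.mpr ⟨hfix x, mem_matchedWithin.mpr ⟨hσx, by rwa [hinv x]⟩⟩
  rw [hswitch, ← card_erase_add_one hx', ← card_erase_add_one hσx']

lemma card_matchedWithin_switch (hinv : Function.Involutive σ) (hfix : ∀ x, σ x ≠ x)
    {a b : α} (ha : a ∈ S) (hσa : σ a ∉ S) (hb : b ∈ S) (hσb : σ b ∉ S) (hab : a ≠ b) :
    #(matchedWithin (switch σ a b) S) = #(matchedWithin σ S) + 2 := by
  have h := card_matchedWithin_switch_add_two (involutive_switch hinv)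
    (switch_apply_ne_self hfix) ha (by rwa [switch_apply_left (hfix a) hab]) hσa
    (by rwa [switch_apply_apply_left (hfix b) hab])
  rw [switch_switch (hfix a) hab] at h
  omega

end Within

variable {n : ℕ}

lemma mem_perfectMatchings {σ : Perm (Fin n)} :
    σ ∈ perfectMatchings n ↔ Function.Involutive σ ∧ ∀ x, σ x ≠ x := by
  simp [perfectMatchings, Function.Involutive, forall_and]

lemma switch_mem_perfectMatchings {σ : Perm (Fin n)} (hσ : σ ∈ perfectMatchings n) (u v : Fin n) :
    switch σ u v ∈ perfectMatchings n :=
  have ⟨hinv, hfix⟩ := mem_perfectMatchings.mp hσ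
  mem_perfectMatchings.mpr ⟨involutive_switch hinv, switch_apply_ne_self hfix⟩

/-- The perfect matchings of `K_n` with exactly `s` edges inside `S`. -/
def innerEdgeMatchings (n : ℕ) (S : Finset (Fin n)) (s : ℕ) : Finset (Perm (Fin n)) :=
  (perfectMatchings n).filter fun σ => #(matchedWithin σ S) = 2 * s

lemma mem_innerEdgeMatchings {S : Finset (Fin n)} {s : ℕ} {σ : Perm (Fin n)} :
    σ ∈ innerEdgeMatchings n S s ↔ σ ∈ perfectMatchings n ∧ #(matchedWithin σ S) = 2 * s :=
  mem_filter

lemma pmProb_eq (S : Finset (Fin n)) (s : ℕ) :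
    pmProb n S s = #(innerEdgeMatchings n S s) / #(perfectMatchings n) := rfl

theorem card_innerEdgeMatchings_succ_mul (S : Finset (Fin n)) (s : ℕ) :
    #(innerEdgeMatchings n S (s + 1)) * (2 * (s + 1) * (n + 2 * (s + 1) - 2 * #S)) =
      #(innerEdgeMatchings n S s) * ((#S - 2 * s) * (#S - 2 * s - 1)) := by
  let L := (innerEdgeMatchings n S (s + 1)).sigma
    fun σ => matchedWithin σ S ×ˢ matchedWithin σ Sᶜ
  let R := (innerEdgeMatchings n S s).sigma fun σ => (matchedOut σ S).offDiag
  let Φ : (Σ _ : Perm (Fin n), Fin n × Fin n) → (Σ _ : Perm (Fin n), Fin n × Fin n) :=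
    fun z => ⟨switch z.1 z.2.1 z.2.2, (z.2.1, z.1 z.2.1)⟩
  have hL :
      #L = #(innerEdgeMatchings n S (s + 1)) * (2 * (s + 1) * (n + 2 * (s + 1) - 2 * #S)) := by
    rw [card_sigma, sum_const_nat]
    intro σ hσ
    obtain ⟨hpm, hσs⟩ := mem_innerEdgeMatchings.mp hσ
    have h := card_matchedWithin_compl S (mem_perfectMatchings.mp hpm).1
    rw [Fintype.card_fin, hσs] at h
    rw [card_product, hσs]
    congr 1
    omega
  have hR : #R = #(innerEdgeMatchings n S s) * ((#S - 2 * s) * (#S - 2 * s - 1)) := by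
    rw [card_sigma, sum_const_nat]
    intro σ hσ
    have h := card_matchedWithin_add_card_matchedOut σ S
    rw [(mem_innerEdgeMatchings.mp hσ).2] at h
    rw [offDiag_card, ← Nat.mul_sub_one]
    congr <;> omega
  have hΦΦ : ∀ z : Σ _ : Perm (Fin n), Fin n × Fin n, z.1 z.2.1 ≠ z.2.1 → z.2.1 ≠ z.2.2 →
      Φ (Φ z) = z := by
    rintro ⟨σ, u, v⟩ hu huv
    simp only [Φ, switch_switch hu huv, switch_apply_left hu huv]
  have hLR : #L = #R := by
    refine card_nbij' Φ Φ ?_ ?_ ?_ ?_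
    · rintro ⟨σ, x, y⟩ hz
      simp only [L, R, Φ, mem_coe, mem_sigma, mem_innerEdgeMatchings, mem_product,
        mem_matchedWithin, mem_matchedOut, mem_compl, mem_offDiag] at hz ⊢
      obtain ⟨⟨hpm, hσs⟩, ⟨hx, hσx⟩, hy, hσy⟩ := hz
      obtain ⟨hinv, hfix⟩ := mem_perfectMatchings.mp hpm
      have hxy : x ≠ y := fun h => hy (h ▸ hx)
      have h := card_matchedWithin_switch_add_two hinv hfix hx hσx hy hσy
      refine ⟨⟨switch_mem_perfectMatchings hpm x y, by omega⟩,
        ⟨hx, ?_⟩, ⟨hσx, ?_⟩, (hfix x).symm⟩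
      · rwa [switch_apply_left (hfix x) hxy]
      · rwa [switch_apply_apply_left (hfix y) hxy]
    · rintro ⟨σ, a, b⟩ hz
      simp only [L, R, Φ, mem_coe, mem_sigma, mem_innerEdgeMatchings, mem_product,
        mem_matchedWithin, mem_matchedOut, mem_compl, mem_offDiag] at hz ⊢
      obtain ⟨⟨hpm, hσs⟩, ⟨ha, hσa⟩, ⟨hb, hσb⟩, hab⟩ := hz
      obtain ⟨hinv, hfix⟩ := mem_perfectMatchings.mp hpm
      have h := card_matchedWithin_switch hinv hfix ha hσa hb hσb hab
      refine ⟨⟨switch_mem_perfectMatchings hpm a b, by omega⟩, ⟨ha, ?_⟩, hσa, ?_⟩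
      · rwa [switch_apply_left (hfix a) hab]
      · rwa [switch_apply_apply_left (hfix b) hab]
    · rintro ⟨σ, x, y⟩ hz
      simp only [L, mem_coe, mem_sigma, mem_innerEdgeMatchings, mem_product,
        mem_matchedWithin, mem_compl] at hz
      obtain ⟨⟨hpm, -⟩, ⟨hx, -⟩, hy, -⟩ := hz
      exact hΦΦ ⟨σ, x, y⟩ ((mem_perfectMatchings.mp hpm).2 x) fun h : x = y => hy (h ▸ hx)
    · rintro ⟨σ, a, b⟩ hz
      simp only [R, mem_coe, mem_sigma, mem_innerEdgeMatchings, mem_offDiag] at hz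
      exact hΦΦ _ ((mem_perfectMatchings.mp hz.1.1).2 a) hz.2.2.2
  rw [← hL, ← hR, hLR]

lemma mul_mul_le_sq_of_recurrences {a b c t D e : ℕ}
    (h₁ : b * (2 * (t + 1) * D) = a * ((e + 2) * (e + 1)))
    (h₂ : c * (2 * (t + 2) * (D + 2)) = b * (e * (e - 1))) :
    (t + 2) * (a * c) ≤ (t + 1) * b ^ 2 := by
  refine Nat.le_of_mul_le_mul_left ?_ (show 0 < 2 * (D + 2) by omega)
  calc 2 * (D + 2) * ((t + 2) * (a * c))
      = a * (c * (2 * (t + 2) * (D + 2))) := by ring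
    _ = b * (a * (e * (e - 1))) := by rw [h₂]; ring
    _ ≤ b * (a * ((e + 2) * (e + 1))) := by gcongr <;> omega
    _ = b * (b * (2 * (t + 1) * D)) := by rw [h₁]
    _ ≤ 2 * (D + 2) * ((t + 1) * b ^ 2) := by
        rw [show 2 * (D + 2) * ((t + 1) * b ^ 2) = b * (b * (2 * (t + 1) * (D + 2))) by ring]
        gcongr
        omega

theorem card_innerEdgeMatchings_ultraLogConcave (S : Finset (Fin n)) (m : ℕ)
    (hne : (innerEdgeMatchings n S (m + 1)).Nonempty) :
    (m + 2) * (#(innerEdgeMatchings n S m) * #(innerEdgeMatchings n S (m + 2))) ≤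
      (m + 1) * #(innerEdgeMatchings n S (m + 1)) ^ 2 := by
  obtain ⟨σ, hσ⟩ := hne
  obtain ⟨hpm, hσs⟩ := mem_innerEdgeMatchings.mp hσ
  have hD := card_matchedWithin_compl S (mem_perfectMatchings.mp hpm).1
  have he := card_matchedWithin_add_card_matchedOut σ S
  rw [Fintype.card_fin, hσs] at hD
  rw [hσs] at he
  have h₁ := card_innerEdgeMatchings_succ_mul S m
  have h₂ := card_innerEdgeMatchings_succ_mul S (m + 1)
  rw [show n + 2 * (m + 1) - 2 * #S = #(matchedWithin σ Sᶜ) by omega,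
    show #S - 2 * m = #(matchedOut σ S) + 2 by omega,
    show #(matchedOut σ S) + 2 - 1 = #(matchedOut σ S) + 1 by omega] at h₁
  rw [show n + 2 * (m + 1 + 1) - 2 * #S = #(matchedWithin σ Sᶜ) + 2 by omega,
    show #S - 2 * (m + 1) = #(matchedOut σ S) by omega] at h₂
  exact mul_mul_le_sq_of_recurrences h₁ h₂

end PerfectMatching

open PerfectMatching in
theorem matching_edge_count_ultra_log_concave_general (n : ℕ)
    (S : Finset (Fin n)) (t : ℕ) (ht : 1 ≤ t) (hsupp : 0 < pmProb n S t) :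
    pmProb n S (t - 1) * pmProb n S (t + 1) ≤
      ((t : ℝ) / (t + 1)) * (pmProb n S t) ^ 2 := by
  obtain ⟨m, rfl⟩ := Nat.exists_eq_add_of_le' ht
  have hne : (innerEdgeMatchings n S (m + 1)).Nonempty :=
    card_pos.mp <| Nat.pos_of_ne_zero fun h => by simp [pmProb_eq, h] at hsupp
  have key : ((m + 2 : ℕ) : ℝ) * (#(innerEdgeMatchings n S m) * #(innerEdgeMatchings n S (m + 2)))
      ≤ ((m + 1 : ℕ) : ℝ) * #(innerEdgeMatchings n S (m + 1)) ^ 2 := by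
    exact_mod_cast card_innerEdgeMatchings_ultraLogConcave S m hne
  rw [Nat.add_sub_cancel, pmProb_eq, pmProb_eq, pmProb_eq, div_mul_div_comm, div_pow, ← sq,
    mul_div_assoc']
  refine div_le_div_of_nonneg_right ?_ (sq_nonneg _)
  rw [div_mul_eq_mul_div, le_div_iff₀ (by positivity)]
  push_cast at key ⊢
  linarith

theorem matching_edge_count_ultra_log_concave (n : ℕ) (hn : Even n) (hn0 : 0 < n)
    (S : Finset (Fin n)) (t : ℕ) (ht : 1 ≤ t) (hsupp : 0 < pmProb n S t) :
    pmProb n S (t - 1) * pmProb n S (t + 1) ≤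
      ((t : ℝ) / (t + 1)) * (pmProb n S t) ^ 2 :=
  matching_edge_count_ultra_log_concave_general n S t ht hsupp
end

section
/- Let f be an r-round matching-certified algorithm, and for x ∈ F_{r-1} define Q(f,x) = Pr_{y∼R_r}[dir(f,y) = 1 | res₁(y) = x]. Then E_{x∼F_{r-1}}[Q(f,x)] ≤ 1/Δ. -/
open MeasureTheory

/-! Edge-labeled `Δ`-ary trees: `r`-neighborhoods and `r`-flowers, following the paper.
Labels lie in `ℝ`, carrying the uniform probability measure on `[0,1]`. -/

variable (Δ : ℕ) [NeZero Δ]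

/-- The recursively defined label-spaces: `Sty 0 = ℝ` (one edge label), and a member of
`Sty (r+1)` records the labels of a depth-`(r+1)` branching, one `Sty r` per child. -/
def Sty : ℕ → Type
  | 0 => ℝ
  | r + 1 => Fin (Δ - 1) → Sty r

instance styMS : ∀ r, MeasurableSpace (Sty Δ r)
  | 0 => inferInstanceAs (MeasurableSpace ℝ)
  | r + 1 => @MeasurableSpace.pi (Fin (Δ - 1)) (fun _ => Sty Δ r) (fun _ => styMS r)

/-- The uniform probability measure on `Sty Δ r` (product of uniform measures on `[0,1]`). -/
noncomputable def styMeasP : ∀ r, {μ : Measure (Sty Δ r) // IsProbabilityMeasure μ}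
  | 0 => ⟨(volume : Measure ℝ).restrict (Set.Icc 0 1), by
      constructor
      show (volume : Measure ℝ).restrict (Set.Icc 0 1) Set.univ = 1
      simp [Real.volume_Icc]⟩
  | r + 1 => by
      haveI i1 : IsProbabilityMeasure ((styMeasP r).1 : Measure (Sty Δ r)) := (styMeasP r).2
      haveI i2 : SigmaFinite ((styMeasP r).1 : Measure (Sty Δ r)) :=
        IsFiniteMeasure.toSigmaFinite _
      refine ⟨Measure.pi fun _ : Fin (Δ - 1) => (styMeasP r).1, ?_⟩
      exact Measure.pi.instIsProbabilityMeasure _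

noncomputable def styMeas (r : ℕ) : Measure (Sty Δ r) := (styMeasP Δ r).1

instance (r : ℕ) : IsProbabilityMeasure (styMeas Δ r) := (styMeasP Δ r).2

/-- `r`-flowers: a label for the center edge `{A,B}`, and for each `s ∈ [r]` a pair
(`A`-side, `B`-side) of depth-`s` labelings `w_{sA}, w_{sB} ∈ S_s`. -/
abbrev Fty (r : ℕ) : Type := Sty Δ 0 × ((s : Fin r) → Sty Δ (s + 1) × Sty Δ (s + 1))

/-- `r`-neighborhoods: for each row `s ∈ [r]` and direction `i ∈ [Δ]` a labeling
`z_{si} ∈ S_{s-1}`. -/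
abbrev Rty (r : ℕ) : Type := (s : Fin r) → Fin Δ → Sty Δ s

/-- The uniform probability measure on `r`-flowers. -/
noncomputable def fMeas (r : ℕ) : Measure (Fty Δ r) :=
  (styMeas Δ 0).prod (Measure.pi fun s : Fin r => (styMeas Δ (s + 1)).prod (styMeas Δ (s + 1)))

/-- The uniform probability measure on `r`-neighborhoods. -/
noncomputable def rMeas (r : ℕ) : Measure (Rty Δ r) :=
  Measure.pi fun s : Fin r => Measure.pi fun _ : Fin Δ => styMeas Δ s

/-- The uniform measure on the free coordinates of an `(r+1)`-neighborhood extension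
of an `r`-flower. -/
noncomputable def tMeas (r : ℕ) : Measure (Fin (Δ - 1) → Sty Δ r) :=
  Measure.pi fun _ => styMeas Δ r

/-- The `v`-side components of a flower (`true` = the `A` side, `false` = the `B` side). -/
def Fty.side {r : ℕ} (v : Bool) (w : Fty Δ r) (s : Fin r) : Sty Δ (s + 1) :=
  if v then (w.2 s).1 else (w.2 s).2

/-- `end_v(w)`: the `r`-neighborhood around the endpoint `v` of the flower `w`;
`w` is the extension of `end_v(w)` in direction `1` (index `0`). -/
def endp {r : ℕ} (v : Bool) (w : Fty Δ r) : Rty Δ r := fun s i =>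
  match s, i with
  | ⟨0, _⟩, ⟨0, _⟩ => w.1
  | ⟨k + 1, hk⟩, ⟨0, _⟩ => Fty.side Δ (!v) w ⟨k, by omega⟩
  | ⟨k, hk⟩, ⟨j + 1, hj⟩ => Fty.side Δ v w ⟨k, hk⟩ ⟨j, by omega⟩

/-- The action of a permutation of the `Δ` directions on an `r`-neighborhood:
`(σ z)_{s, σ(i)} = z_{s,i}`. -/
def permR {r : ℕ} (σ : Equiv.Perm (Fin Δ)) (z : Rty Δ r) : Rty Δ r :=
  fun s i => z s (σ⁻¹ i)

/-- `res₁(z)`: the restriction of an `(r+1)`-neighborhood to the `r`-flower in direction `1`. -/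
def res1 {r : ℕ} (z : Rty Δ (r + 1)) : Fty Δ r :=
  ⟨z ⟨0, Nat.succ_pos r⟩ (0 : Fin Δ),
   fun s => ⟨fun i => z ⟨s, by have := s.isLt; omega⟩ ⟨(i : ℕ) + 1, by have := i.isLt; omega⟩,
             z ⟨(s : ℕ) + 1, by have := s.isLt; omega⟩ (0 : Fin Δ)⟩⟩

/-- `res_i(z) := res₁(σ_i z)` where `σ_i` swaps directions `1` and `i`. -/
def resi {r : ℕ} (z : Rty Δ (r + 1)) (i : Fin Δ) : Fty Δ r :=
  res1 Δ (permR Δ (Equiv.swap 0 i) z)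

/-- The reversal of a flower: exchanges the roles of the endpoints `A` and `B`. -/
def frev {r : ℕ} (w : Fty Δ r) : Fty Δ r := ⟨w.1, fun s => ⟨(w.2 s).2, (w.2 s).1⟩⟩

/-- The `(r+1)`-neighborhood extending the `r`-flower `x` in direction `1`, with free
coordinates `t` (the labels at distance `r` to `r+1` in directions `2,…,Δ`); this realizes
the conditional distribution of `y ∼ R_{r+1}` given `res₁(y) = x`. -/
def extend1 {r : ℕ} (x : Fty Δ r) (t : Fin (Δ - 1) → Sty Δ r) : Rty Δ (r + 1) := fun s i =>
  match s, i with
  | ⟨0, _⟩, ⟨0, _⟩ => x.1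
  | ⟨k + 1, hk⟩, ⟨0, _⟩ => (x.2 ⟨k, by omega⟩).2
  | ⟨k, hk⟩, ⟨j + 1, hj⟩ =>
      if h : k < r then (x.2 ⟨k, h⟩).1 ⟨j, by omega⟩
      else cast (congrArg (Sty Δ) (by omega : r = k)) (t ⟨j, by omega⟩)

/-- Two `r`-flowers are incident if they are extensions of a common `r`-neighborhood
in two distinct directions. -/
def Incident {r : ℕ} (w w' : Fty Δ r) : Prop :=
  ∃ (v v' : Bool) (σ : Equiv.Perm (Fin Δ)),
    endp Δ v w = permR Δ σ (endp Δ v' w') ∧ σ 0 ≠ 0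

/-- An `r`-round matching-certified algorithm: a measurable `f : F_r → {0,1}` never
accepting two incident flowers. -/
def MatchingCertified {r : ℕ} (f : Fty Δ r → Bool) : Prop :=
  Measurable f ∧ ∀ w w' : Fty Δ r, Incident Δ w w' → ¬(f w = true ∧ f w' = true)

/-- The vertex survival probability `P_f`: the probability over a uniform
`(r+1)`-neighborhood that none of the `Δ` incident `r`-flowers is accepted. -/
noncomputable def survP {r : ℕ} (f : Fty Δ r → Bool) : ℝ :=
  (rMeas Δ (r + 1) {z | ∀ i : Fin Δ, f (resi Δ z i) = false}).toReal

open Classical in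
/-- `dir(f,y)`: the direction `i` (if any) such that some flower extension of `y`
in direction `i` is accepted by `f`; `none` encodes the value `0`. -/
noncomputable def dir {r : ℕ} (f : Fty Δ r → Bool) (y : Rty Δ r) : Option (Fin Δ) :=
  if h : ∃ i : Fin Δ, ∃ w : Fty Δ r, f w = true ∧ endp Δ true w = permR Δ (Equiv.swap 0 i) y
  then some h.choose else none

/-- `Q(f,x)`: the probability that a uniform `(r+1)`-neighborhood extension `y` of the
`r`-flower `x` (conditioned on `res₁(y) = x`) has `dir(f,y) = 1`. -/
noncomputable def Qdir {r : ℕ} (f : Fty Δ (r + 1) → Bool) (x : Fty Δ r) : ℝ :=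
  (tMeas Δ r {t | dir Δ f (extend1 Δ x t) = some (0 : Fin Δ)}).toReal

/-- The set `X_r(f,δ)` of `δ`-good `r`-flowers. -/
def Xgood {r : ℕ} (f : Fty Δ (r + 1) → Bool) (δ : ℝ) : Set (Fty Δ r) :=
  {x | 1 - δ ≤ Qdir Δ f x ∧ 1 - δ ≤ Qdir Δ f (frev Δ x)}

/-- The `m`-flower extending an `m`-neighborhood `z` in direction `1` with free coordinate
`u ∈ S_m` (the `B`-side labels at depth `m`); realizes the conditional distribution of
`y ∼ F_m` given `end_A(y) = z`. -/
def extEnd : {m : ℕ} → Rty Δ m → Sty Δ m → Fty Δ m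
  | 0, _, u => ⟨u, fun s => Fin.elim0 s⟩
  | m + 1, z, u =>
      ⟨z ⟨0, Nat.succ_pos m⟩ (0 : Fin Δ),
       fun s =>
        ⟨fun i => z ⟨s, s.isLt⟩ ⟨(i : ℕ) + 1, by have := i.isLt; omega⟩,
         if h : (s : ℕ) + 1 < m + 1 then z ⟨(s : ℕ) + 1, h⟩ (0 : Fin Δ)
         else cast (congrArg (Sty Δ) (by have := s.isLt; omega : m + 1 = (s : ℕ) + 1)) u⟩⟩

/-- `P_i(f,x,δ)`: the probability that a uniform `m`-flower extension of the
`m`-neighborhood `x` in direction `i` is `δ`-good. -/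
noncomputable def dirP {m : ℕ} (f : Fty Δ (m + 1) → Bool) (x : Rty Δ m) (i : Fin Δ)
    (δ : ℝ) : ℝ :=
  (styMeas Δ m {u | extEnd Δ (permR Δ (Equiv.swap 0 i) x) u ∈ Xgood Δ f δ}).toReal

/-- `P_comp(f,x,δ) = P(f,x,δ) - P_max(f,x,δ)`. -/
noncomputable def Pcomp {m : ℕ} (f : Fty Δ (m + 1) → Bool) (x : Rty Δ m) (δ : ℝ) : ℝ :=
  (∑ i : Fin Δ, dirP Δ f x i δ) - ⨆ i : Fin Δ, dirP Δ f x i δ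

/-! The events `dir(f, y) = i` for the `Δ` directions `i` are pairwise disjoint because `f` is
matching-certified, and the relabeling `σ_i` of the directions, which preserves the uniform
measure, carries the event for direction `1` to the one for direction `i`; so the event for
direction `1` has probability at most `1/Δ`. These events need not be measurable, but they are
analytic, so Lusin's separation theorem encloses them in pairwise disjoint Borel sets, to which the
counting argument applies. Finally, averaging `Q(f, x)` over `x` is integrating over `y ∼ R_r`,
since extending a uniform flower by uniform free labels yields a uniform neighborhood. -/

open Set Function

theorem exists_measurableSet_superset_pairwise_disjoint {α ι : Type*} [TopologicalSpace α]
    [T2Space α] [MeasurableSpace α] [OpensMeasurableSpace α] [Countable ι] {A : ι → Set α}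
    (hA : ∀ i, AnalyticSet (A i)) (hd : Pairwise (Disjoint on A)) :
    ∃ U : ι → Set α, (∀ i, MeasurableSet (U i)) ∧ (∀ i, A i ⊆ U i) ∧
      Pairwise (Disjoint on U) := by
  have hsep : ∀ i, MeasurablySeparable (A i) (⋃ j : {j // j ≠ i}, A j) := fun i =>
    (hA i).measurablySeparable (.iUnion fun j => hA j)
      (disjoint_iUnion_right.2 fun j => hd j.2.symm)
  choose u hAu hdisj hu using hsep
  refine ⟨fun i => u i \ ⋃ j : {j // j ≠ i}, u j, fun i => (hu i).diff (.iUnion fun j => hu j),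
    fun i x hx => ⟨hAu i hx, ?_⟩, fun i j hij => ?_⟩
  · simp only [mem_iUnion, not_exists]
    exact fun j hj => (hdisj j).notMem_of_mem_left (mem_iUnion.2 ⟨⟨i, j.2.symm⟩, hx⟩) hj
  · exact disjoint_left.2 fun x hi hj => hi.2 (mem_iUnion.2 ⟨⟨j, hij.symm⟩, hj.1⟩)

theorem card_mul_measure_le_of_pairwise_disjoint_preimage {X ι : Type*} [MeasurableSpace X]
    [Fintype ι] {μ : Measure X} {g : ι → X → X} (hg : ∀ i, MeasurePreserving (g i) μ μ)
    {V : Set X} (hV : MeasurableSet V) (hd : Pairwise (Disjoint on fun i => g i ⁻¹' V)) :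
    Fintype.card ι * μ V ≤ μ univ :=
  calc (Fintype.card ι : ENNReal) * μ V = ∑ i, μ (g i ⁻¹' V) := by
        simp [(hg _).measure_preimage hV.nullMeasurableSet]
    _ = μ (⋃ i, g i ⁻¹' V) := by
        rw [measure_iUnion hd fun i => (hg i).measurable hV, tsum_fintype]
    _ ≤ μ univ := measure_mono (subset_univ _)

theorem exists_measurableSet_superset_card_mul_measure_le {X Y ι : Type*} [MeasurableSpace X]
    [StandardBorelSpace X] [MeasurableSpace Y] [StandardBorelSpace Y] [Fintype ι]
    {μ : Measure X} {g : ι → X → X} (hg : ∀ i, MeasurePreserving (g i) μ μ)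
    (hg_inv : ∀ i, Involutive (g i)) {φ : Y → X} (hφ : Measurable φ) {S : Set Y}
    (hS : MeasurableSet S) (hd : Pairwise (Disjoint on fun i => g i ⁻¹' (φ '' S))) :
    ∃ V, MeasurableSet V ∧ φ '' S ⊆ V ∧ Fintype.card ι * μ V ≤ μ univ := by
  let := upgradeStandardBorel X
  have hA : ∀ i, AnalyticSet (g i ⁻¹' (φ '' S)) := fun i => by
    rw [← (hg_inv i).image_eq_preimage_symm, image_image]
    exact hS.analyticSet_image ((hg i).measurable.comp hφ)
  obtain ⟨U, hU, hAU, hUd⟩ := exists_measurableSet_superset_pairwise_disjoint hA hd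
  have hVU : ∀ i, g i ⁻¹' ⋂ j, g j ⁻¹' U j ⊆ U i := fun i y hy => by
    simpa only [mem_preimage, hg_inv i y] using mem_iInter.1 hy i
  refine ⟨⋂ i, g i ⁻¹' U i, .iInter fun i => (hg i).measurable (hU i), fun x hx => ?_,
    card_mul_measure_le_of_pairwise_disjoint_preimage hg
      (.iInter fun i => (hg i).measurable (hU i)) fun i j hij => (hUd hij).mono (hVU i) (hVU j)⟩
  exact mem_iInter.2 fun i => hAU i (by simpa only [mem_preimage, hg_inv i x] using hx)

theorem integral_measureReal_le_of_subset_preimage {α β γ : Type*} [MeasurableSpace α]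
    [MeasurableSpace β] [MeasurableSpace γ] {μ : Measure α} {ν : Measure β} {ρ : Measure γ}
    [IsFiniteMeasure μ] [IsFiniteMeasure ν] {e : α × β → γ}
    (he : MeasurePreserving e (μ.prod ν) ρ) {V : Set γ} (hV : MeasurableSet V) {s : α → Set β}
    (hs : ∀ x, s x ⊆ {t | e (x, t) ∈ V}) : ∫ x, ν.real (s x) ∂μ ≤ ρ.real V := by
  have hW : MeasurableSet (e ⁻¹' V) := he.measurable hV
  have hfib : Measurable fun x => ν (Prod.mk x ⁻¹' (e ⁻¹' V)) := measurable_measure_prodMk_left hW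
  calc ∫ x, ν.real (s x) ∂μ ≤ ∫ x, ν.real (Prod.mk x ⁻¹' (e ⁻¹' V)) ∂μ :=
        integral_mono_of_nonneg (.of_forall fun _ => measureReal_nonneg)
          (integrable_toReal_of_lintegral_ne_top hfib.aemeasurable
            (by rw [← Measure.prod_apply hW]; exact measure_ne_top _ _))
          (.of_forall fun x => measureReal_mono (hs x))
    _ = (μ.prod ν).real (e ⁻¹' V) := by
        simp only [measureReal_def]
        rw [Measure.prod_apply hW, integral_toReal hfib.aemeasurable
          (.of_forall fun _ => measure_lt_top _ _)]
    _ = ρ.real V := by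
        rw [measureReal_def, measureReal_def, he.measure_preimage hV.nullMeasurableSet]

instance Sty.instStandardBorelSpace : ∀ r, StandardBorelSpace (Sty Δ r)
  | 0 => inferInstanceAs (StandardBorelSpace ℝ)
  | r + 1 => letI := Sty.instStandardBorelSpace r
      inferInstanceAs (StandardBorelSpace (Fin (Δ - 1) → Sty Δ r))

instance fMeas.instIsProbabilityMeasure (r : ℕ) : IsProbabilityMeasure (fMeas Δ r) := by
  unfold fMeas; infer_instance

instance tMeas.instIsProbabilityMeasure (r : ℕ) : IsProbabilityMeasure (tMeas Δ r) := by
  unfold tMeas; infer_instance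

instance rMeas.instIsProbabilityMeasure (r : ℕ) : IsProbabilityMeasure (rMeas Δ r) := by
  unfold rMeas; infer_instance

omit [NeZero Δ] in
theorem styMeas_succ (r : ℕ) : styMeas Δ (r + 1) = Measure.pi fun _ => styMeas Δ r := rfl

omit [NeZero Δ] in
theorem permR_permR {r : ℕ} (σ τ : Equiv.Perm (Fin Δ)) (z : Rty Δ r) :
    permR Δ σ (permR Δ τ z) = permR Δ (σ * τ) z := rfl

omit [NeZero Δ] in
theorem permR_one {r : ℕ} (z : Rty Δ r) : permR Δ 1 z = z := rfl

omit [NeZero Δ] in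
theorem permR_swap_involutive {r : ℕ} (i j : Fin Δ) :
    Involutive (permR Δ (r := r) (Equiv.swap i j)) := fun z => by
  rw [permR_permR, Equiv.swap_mul_self, permR_one]

omit [NeZero Δ] in
theorem measurePreserving_permR {r : ℕ} (σ : Equiv.Perm (Fin Δ)) :
    MeasurePreserving (permR Δ (r := r) σ) (rMeas Δ r) (rMeas Δ r) :=
  measurePreserving_pi (fun s : Fin r => Measure.pi fun _ : Fin Δ => styMeas Δ s)
    (fun s : Fin r => Measure.pi fun _ : Fin Δ => styMeas Δ s) fun s =>
    measurePreserving_arrowCongr' (fun _ => styMeas Δ s) (fun _ => styMeas Δ s) σ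
      (MeasurableEquiv.refl _) fun _ => MeasurePreserving.id _

omit [NeZero Δ] in
theorem measurable_side {r : ℕ} (v : Bool) (s : Fin r) :
    Measurable fun w : Fty Δ r => Fty.side Δ v w s := by
  cases v <;> simp only [Fty.side, Bool.false_eq_true, if_false, if_true] <;> fun_prop

omit [NeZero Δ] in
theorem measurable_endp {r : ℕ} (v : Bool) : Measurable (endp Δ (r := r) v) := by
  refine measurable_pi_lambda _ fun s => measurable_pi_lambda _ fun i => ?_
  match s, i with
  | ⟨0, _⟩, ⟨0, _⟩ => exact measurable_fst
  | ⟨k + 1, _⟩, ⟨0, _⟩ => exact measurable_side Δ (!v) _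
  | ⟨0, hk⟩, ⟨j + 1, _⟩ => exact (measurable_pi_apply _).comp (measurable_side Δ v ⟨0, hk⟩)
  | ⟨k + 1, hk⟩, ⟨j + 1, _⟩ =>
    exact (measurable_pi_apply _).comp (measurable_side Δ v ⟨k + 1, hk⟩)

theorem mem_preimage_permR_of_dir_eq_some {r : ℕ} {f : Fty Δ r → Bool} {y : Rty Δ r}
    {i : Fin Δ} (h : dir Δ f y = some i) :
    y ∈ permR Δ (Equiv.swap 0 i) ⁻¹' (endp Δ true '' {w | f w = true}) := by
  unfold dir at h
  split_ifs at h with hex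
  obtain rfl := Option.some.inj h
  obtain ⟨w, hw, hwy⟩ := hex.choose_spec
  exact ⟨w, hw, hwy⟩

theorem pairwise_disjoint_preimage_permR {r : ℕ} {f : Fty Δ r → Bool}
    (hf : MatchingCertified Δ f) :
    Pairwise (Disjoint on fun i =>
      permR Δ (Equiv.swap 0 i) ⁻¹' (endp Δ true '' {w | f w = true})) := by
  intro i j hij
  refine disjoint_left.2 fun y ⟨w, hw, hwy⟩ ⟨w', hw', hwy'⟩ => hf.2 w w' ?_ ⟨hw, hw'⟩
  refine ⟨true, true, Equiv.swap 0 i * Equiv.swap 0 j, ?_, ?_⟩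
  · rw [hwy, hwy', permR_permR, mul_assoc, Equiv.swap_mul_self, mul_one]
  · rw [Equiv.Perm.mul_apply, Equiv.swap_apply_left]
    grind

def dirSucc (j : Fin (Δ - 1)) : Fin Δ := ⟨j + 1, by omega⟩

theorem prod_univ_dirSucc {M : Type*} [CommMonoid M] (g : Fin Δ → M) :
    ∏ i, g i = g 0 * ∏ j, g (dirSucc Δ j) := by
  obtain ⟨n, rfl⟩ := Nat.exists_eq_add_one_of_ne_zero (NeZero.ne Δ)
  exact Fin.prod_univ_succ g

theorem forall_dirSucc_iff {P : Fin Δ → Prop} :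
    (∀ i, P i) ↔ P 0 ∧ ∀ j, P (dirSucc Δ j) := by
  obtain ⟨n, rfl⟩ := Nat.exists_eq_add_one_of_ne_zero (NeZero.ne Δ)
  exact Fin.forall_fin_succ

section extend1
variable {r : ℕ} (x : Fty Δ r) (t : Fin (Δ - 1) → Sty Δ r)

theorem extend1_zero_zero : extend1 Δ x t 0 0 = x.1 := rfl

theorem extend1_succ_zero (k : Fin r) : extend1 Δ x t k.succ 0 = (x.2 k).2 := rfl

omit [NeZero Δ] in
theorem extend1_castSucc_dirSucc (k : Fin r) (j : Fin (Δ - 1)) :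
    extend1 Δ x t k.castSucc (dirSucc Δ j) = (x.2 k).1 j := by
  obtain ⟨k, hk⟩ := k
  cases k <;> simp [extend1, dirSucc, hk]

omit [NeZero Δ] in
theorem extend1_last_dirSucc (j : Fin (Δ - 1)) :
    extend1 Δ x t (Fin.last r) (dirSucc Δ j) = t j := by
  cases r <;> simp [extend1, dirSucc]

end extend1

theorem forall_row_dir_iff {r : ℕ} {P : Fin (r + 1) → Fin Δ → Prop} :
    (∀ s i, P s i) ↔ P 0 0 ∧ (∀ (k : Fin r) j, P k.castSucc (dirSucc Δ j)) ∧
      (∀ k : Fin r, P k.succ 0) ∧ ∀ j, P (Fin.last r) (dirSucc Δ j) := by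
  simp only [forall_dirSucc_iff Δ (P := P _), forall_and, Fin.forall_fin_succ (P := (P · 0)),
    Fin.forall_fin_succ' (P := fun s => ∀ j, P s (dirSucc Δ j))]
  tauto

theorem measurable_extend1 {r : ℕ} :
    Measurable fun p : Fty Δ r × (Fin (Δ - 1) → Sty Δ r) => extend1 Δ p.1 p.2 := by
  simp only [measurable_pi_iff]
  rw [forall_row_dir_iff]
  simp only [extend1_zero_zero, extend1_succ_zero, extend1_castSucc_dirSucc, extend1_last_dirSucc]
  exact ⟨by fun_prop, fun k j => by fun_prop, fun k => by fun_prop, fun j => by fun_prop⟩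

theorem preimage_extend1_pi {r : ℕ} (B : ∀ s : Fin (r + 1), Fin Δ → Set (Sty Δ s)) :
    (fun p : Fty Δ r × (Fin (Δ - 1) → Sty Δ r) => extend1 Δ p.1 p.2) ⁻¹'
        univ.pi (fun s => univ.pi (B s)) =
      ((B 0 0 ×ˢ univ.pi fun k : Fin r =>
          (univ.pi fun j => B k.castSucc (dirSucc Δ j)) ×ˢ B k.succ 0) ×ˢ
        univ.pi fun j => B (Fin.last r) (dirSucc Δ j) :
        Set (Fty Δ r × (Fin (Δ - 1) → Sty Δ r))) := by
  ext ⟨x, t⟩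
  -- `erw`: the row indices `0`, `k.succ`, `Fin.last r` are only definitionally `0`, `k + 1`, `r`,
  -- so the product sets above do not syntactically live in `Fty Δ r × (Fin (Δ - 1) → Sty Δ r)`.
  erw [mem_prod, mem_prod]
  simp only [mem_preimage, mem_univ_pi, mem_prod, forall_row_dir_iff, extend1_zero_zero, extend1_succ_zero,
    extend1_castSucc_dirSucc, extend1_last_dirSucc, forall_and, and_assoc]

theorem prod_univ_row_dir {M : Type*} [CommMonoid M] {r : ℕ} (g : Fin (r + 1) → Fin Δ → M) :
    ∏ s, ∏ i, g s i = g 0 0 * ((∏ k : Fin r, ∏ j, g k.castSucc (dirSucc Δ j)) *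
      ∏ k : Fin r, g k.succ 0) * ∏ j, g (Fin.last r) (dirSucc Δ j) := by
  simp only [prod_univ_dirSucc Δ (g _), Finset.prod_mul_distrib]
  rw [Fin.prod_univ_succ (fun s => g s 0),
    Fin.prod_univ_castSucc (fun s => ∏ j, g s (dirSucc Δ j))]
  ac_rfl

theorem measurePreserving_extend1 (r : ℕ) :
    MeasurePreserving (fun p : Fty Δ r × (Fin (Δ - 1) → Sty Δ r) => extend1 Δ p.1 p.2)
      ((fMeas Δ r).prod (tMeas Δ r)) (rMeas Δ (r + 1)) := by
  refine ⟨measurable_extend1 Δ, (Measure.pi_eq_generateFrom (fun _ => generateFrom_pi)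
    (fun _ => isPiSystem_pi) (fun _ => Measure.FiniteSpanningSetsIn.pi fun _ =>
      (styMeas Δ _).toFiniteSpanningSetsIn) fun S hS => ?_).symm⟩
  choose B hB hSB using hS
  obtain rfl : S = fun s => univ.pi (B s) := funext fun s => (hSB s).symm
  rw [Measure.map_apply (measurable_extend1 Δ)
    (.univ_pi fun s => .univ_pi fun i => hB s i trivial), preimage_extend1_pi]
  have hrow : ∀ k : Fin r, ((styMeas Δ (k + 1)).prod (styMeas Δ (k + 1)))
      ((univ.pi fun j => B k.castSucc (dirSucc Δ j)) ×ˢ B k.succ 0) =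
        (∏ j, styMeas Δ k (B k.castSucc (dirSucc Δ j))) * styMeas Δ (k + 1) (B k.succ 0) :=
    fun k => by erw [Measure.prod_prod, styMeas_succ, Measure.pi_pi]
  erw [Measure.prod_prod, fMeas, Measure.prod_prod, Measure.pi_pi, tMeas, Measure.pi_pi]
  simp only [hrow, Measure.pi_pi]
  rw [Finset.prod_mul_distrib]
  exact (prod_univ_row_dir Δ fun s i => styMeas Δ s (B s i)).symm

theorem expected_Q_le {r : ℕ} (f : Fty Δ (r + 1) → Bool)
    (hf : MatchingCertified Δ f) :
    ∫ x, Qdir Δ f x ∂(fMeas Δ r) ≤ 1 / (Δ : ℝ) := by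
  obtain ⟨V, hV, hAV, hVle⟩ := exists_measurableSet_superset_card_mul_measure_le
    (fun i => measurePreserving_permR Δ (Equiv.swap 0 i)) (fun i => permR_swap_involutive Δ 0 i)
    (measurable_endp Δ true) (hf.1 (measurableSet_singleton true))
    (pairwise_disjoint_preimage_permR Δ hf)
  have hdir : ∀ x, {t | dir Δ f (extend1 Δ x t) = some 0} ⊆ {t | extend1 Δ x t ∈ V} :=
    fun x t ht => hAV (by
      simpa [← Equiv.Perm.one_def, permR_one] using mem_preimage_permR_of_dir_eq_some Δ ht)
  have hΔ : (0 : ℝ) < Δ := Nat.cast_pos.2 (NeZero.pos Δ)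
  have hV' : Δ * (rMeas Δ (r + 1)).real V ≤ 1 := by
    simpa [measureReal_def, ENNReal.toReal_mul] using
      ENNReal.toReal_mono ENNReal.one_ne_top (hVle.trans_eq measure_univ)
  calc ∫ x, Qdir Δ f x ∂(fMeas Δ r) ≤ (rMeas Δ (r + 1)).real V :=
        integral_measureReal_le_of_subset_preimage (measurePreserving_extend1 Δ r) hV hdir
    _ ≤ 1 / Δ := by rw [le_div_iff₀ hΔ]; linarith
end

section
/- Let Q : X → [0,1] be a measurable function on a probability space X, and let an involution x ↦ x̄ on X preserve the measure. Suppose E[Q(x)] ≤ 1/Δ and E[Q(x)·Q(x̄)] ≥ (1 - P)/Δ for some Δ ≥ 1 and P ∈ [0,1]. Then for any δ ∈ (0,1], Pr[Q(x) ≥ 1-δ and Q(x̄) ≥ 1-δ] ≥ (1 - 2P/δ)/Δ. -/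
/-!
Let `A` be the set where both `Q x` and `Q (inv x)` are at least `1 - δ`. Writing `a = Q x`,
`b = Q (inv x)`, one has pointwise `δ a ≤ δ 1_A + a (1 - b) + b (1 - a)`: on `A` because
`a ≤ 1`, and off `A` because either `b < 1 - δ` (so `δ a ≤ a (1 - b)`) or `a < 1 - δ ≤ b`
(so `δ a ≤ δ b ≤ b (1 - a)`). Integrating, and using that `inv` preserves `μ` so that
`E[Q ∘ inv] = E[Q]`, gives `δ μ(A) ≥ 2 E[Q · Q ∘ inv] - (2 - δ) E[Q]`, and the two moment
bounds turn the right-hand side into `(δ - 2P) / Δ`.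
-/

open MeasureTheory

theorem mul_le_mul_ite_add_of_mem_Icc {a b δ : ℝ} (ha : a ∈ Set.Icc (0 : ℝ) 1)
    (hb : b ∈ Set.Icc (0 : ℝ) 1) (hδ : 0 ≤ δ) :
    δ * a ≤ δ * (if 1 - δ ≤ a ∧ 1 - δ ≤ b then 1 else 0) + (a + b - 2 * (a * b)) := by
  obtain ⟨ha0, ha1⟩ := ha
  obtain ⟨hb0, hb1⟩ := hb
  split_ifs with h
  · nlinarith [mul_nonneg ha0 (sub_nonneg.2 hb1), mul_nonneg hb0 (sub_nonneg.2 ha1)]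
  · rw [mul_zero, zero_add]
    rcases lt_or_ge b (1 - δ) with hb' | hb'
    · nlinarith [mul_nonneg ha0 (by linarith : 0 ≤ 1 - b - δ), mul_nonneg hb0 (sub_nonneg.2 ha1)]
    · have ha' : a < 1 - δ := by by_contra! ha'; exact h ⟨ha', hb'⟩
      nlinarith [mul_nonneg hb0 (by linarith : 0 ≤ 1 - a - δ),
        mul_nonneg hδ (by linarith : 0 ≤ b - a), mul_nonneg ha0 (sub_nonneg.2 hb1)]

section UnitInterval

variable {X : Type*} [MeasurableSpace X] {μ : Measure X} [IsFiniteMeasure μ] {f g : X → ℝ}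

theorem integrable_of_mem_Icc (hf : Measurable f) (hf01 : ∀ x, f x ∈ Set.Icc (0 : ℝ) 1) :
    Integrable f μ :=
  .of_bound hf.aestronglyMeasurable 1 <| .of_forall fun x => by
    rw [Real.norm_of_nonneg (hf01 x).1]
    exact (hf01 x).2

theorem mul_integral_le_mul_measureReal_add (hf : Measurable f) (hg : Measurable g)
    (hf01 : ∀ x, f x ∈ Set.Icc (0 : ℝ) 1) (hg01 : ∀ x, g x ∈ Set.Icc (0 : ℝ) 1)
    {δ : ℝ} (hδ : 0 ≤ δ) :
    δ * ∫ x, f x ∂μ ≤ δ * μ.real {x | 1 - δ ≤ f x ∧ 1 - δ ≤ g x}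
      + (∫ x, f x ∂μ + ∫ x, g x ∂μ - 2 * ∫ x, f x * g x ∂μ) := by
  set A := {x | 1 - δ ≤ f x ∧ 1 - δ ≤ g x}
  have hA : MeasurableSet A :=
    (measurableSet_le measurable_const hf).inter (measurableSet_le measurable_const hg)
  have hfi : Integrable f μ := integrable_of_mem_Icc hf hf01
  have hgi : Integrable g μ := integrable_of_mem_Icc hg hg01
  have hprod : Integrable (fun x => f x * g x) μ :=
    integrable_of_mem_Icc (hf.mul hg) fun x =>
      ⟨mul_nonneg (hf01 x).1 (hg01 x).1, mul_le_one₀ (hf01 x).2 (hg01 x).1 (hg01 x).2⟩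
  have hAi : Integrable (fun x => δ * A.indicator 1 x) μ :=
    ((integrable_const (1 : ℝ)).indicator hA).const_mul δ
  have hsum : Integrable (fun x => f x + g x) μ := hfi.add hgi
  have hrest : Integrable (fun x => f x + g x - 2 * (f x * g x)) μ :=
    hsum.sub (hprod.const_mul 2)
  calc δ * ∫ x, f x ∂μ = ∫ x, δ * f x ∂μ := (integral_const_mul δ _).symm
    _ ≤ ∫ x, δ * A.indicator 1 x + (f x + g x - 2 * (f x * g x)) ∂μ := by
      refine integral_mono (hfi.const_mul δ) (hAi.add hrest) fun x => ?_
      simpa only [Set.indicator_apply, Set.mem_ofPred_eq, Pi.one_apply, A]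
        using mul_le_mul_ite_add_of_mem_Icc (hf01 x) (hg01 x) hδ
    _ = _ := by
      rw [integral_add hAi hrest, integral_sub hsum (hprod.const_mul 2), integral_add hfi hgi,
        integral_const_mul, integral_const_mul, integral_indicator_one hA]

end UnitInterval

theorem good_flower_weak_general {X : Type*} [MeasurableSpace X] (μ : Measure X)
    [IsProbabilityMeasure μ] (Q : X → ℝ) (hQm : Measurable Q)
    (hQ01 : ∀ x, Q x ∈ Set.Icc (0 : ℝ) 1)
    (inv : X → X) (hinv : MeasurePreserving inv μ μ)
    (Δ P : ℝ)
    (h1 : ∫ x, Q x ∂μ ≤ 1 / Δ)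
    (h2 : (1 - P) / Δ ≤ ∫ x, Q x * Q (inv x) ∂μ)
    (δ : ℝ) (hδ : δ ∈ Set.Ioc (0 : ℝ) 1) :
    (1 - 2 * P / δ) / Δ ≤ (μ {x | 1 - δ ≤ Q x ∧ 1 - δ ≤ Q (inv x)}).toReal := by
  obtain ⟨hδ0, hδ1⟩ := hδ
  have hQinv : ∫ x, Q (inv x) ∂μ = ∫ x, Q x ∂μ := by
    rw [← integral_map hinv.measurable.aemeasurable hQm.aestronglyMeasurable, hinv.map_eq]
  have key := mul_integral_le_mul_measureReal_add (μ := μ) hQm (hQm.comp hinv.measurable)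
    hQ01 (fun x => hQ01 (inv x)) hδ0.le
  rw [Function.comp_def, hQinv] at key
  rw [← measureReal_def, show (1 - 2 * P / δ) / Δ = (δ - 2 * P) * Δ⁻¹ / δ by field_simp,
    div_le_iff₀ hδ0]
  rw [one_div] at h1
  rw [div_eq_mul_inv] at h2
  linarith [mul_le_mul_of_nonneg_left h1 (by linarith : (0 : ℝ) ≤ 2 - δ)]

theorem good_flower_weak {X : Type*} [MeasurableSpace X] (μ : Measure X)
    [IsProbabilityMeasure μ] (Q : X → ℝ) (hQm : Measurable Q)
    (hQ01 : ∀ x, Q x ∈ Set.Icc (0 : ℝ) 1)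
    (inv : X → X) (hinv : MeasurePreserving inv μ μ) (hinvol : Function.Involutive inv)
    (Δ P : ℝ) (hΔ : 1 ≤ Δ) (hP : P ∈ Set.Icc (0 : ℝ) 1)
    (h1 : ∫ x, Q x ∂μ ≤ 1 / Δ)
    (h2 : (1 - P) / Δ ≤ ∫ x, Q x * Q (inv x) ∂μ)
    (δ : ℝ) (hδ : δ ∈ Set.Ioc (0 : ℝ) 1) :
    (1 - 2 * P / δ) / Δ ≤ (μ {x | 1 - δ ≤ Q x ∧ 1 - δ ≤ Q (inv x)}).toReal :=
  good_flower_weak_general μ Q hQm hQ01 inv hinv Δ P h1 h2 δ hδ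
end

section
/- Let Q : X → [0,1] be measurable on a probability space X with a measure-preserving involution x ↦ x̄, and suppose E[Q(x)] ≤ 1/Δ and E[Q(x)·Q(x̄)] ≥ (1 - P)/Δ for some Δ ≥ 1, P ∈ [0,1]. Then for any ξ ∈ (0,1), E_{τ∼Uniform[0,ξ]}[ Pr_x[Q(x) ≥ 1-τ and Q(x̄) ≥ 1-τ] ] ≥ (1 - 7P/ξ)/Δ. -/
/-!
Write `m x = min (Q x) (Q x̄)`. Interchanging the two integrals, the `τ`-average of
`μ {x | 1 - m x ≤ τ}` over `[0, ξ]` is `E[(ξ - (1 - m))⁺]`. For `a, b ∈ [0, 1]` one has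
`(ξ + 2) a b - a - b ≤ (ξ - (1 - min a b))⁺`, and `E[Q(x̄)] = E[Q]` because the involution
preserves `μ`; hence the average is at least
`(ξ + 2) E[Q Q̄] - 2 E[Q] ≥ ((ξ + 2)(1 - P) - 2) / Δ = (ξ - (ξ + 2) P) / Δ ≥ (ξ - 7 P) / Δ`.
-/

open MeasureTheory Set

lemma mul_mul_sub_sub_le_max_min {ξ a b : ℝ} (hξ : 0 ≤ ξ) (ha : a ∈ Icc (0 : ℝ) 1)
    (hb : b ∈ Icc (0 : ℝ) 1) :
    (ξ + 2) * (a * b) - a - b ≤ max (ξ - (1 - min a b)) 0 := by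
  wlog hab : a ≤ b generalizing a b
  · rw [min_comm]; linarith [this hb ha (le_of_not_ge hab)]
  obtain ⟨ha0, ha1⟩ := ha
  obtain ⟨hb0, hb1⟩ := hb
  have h1b : 0 ≤ 1 - b := sub_nonneg.2 hb1
  rw [min_eq_left hab]
  rcases le_total (1 - a) ξ with h | h
  · refine le_max_of_le_left ?_
    linarith [mul_nonneg h1b (sub_nonneg.2 h), mul_nonneg ha0 h1b,
      mul_nonneg (mul_nonneg hξ hb0) (sub_nonneg.2 ha1)]
  · refine le_max_of_le_right ?_
    linarith [mul_nonneg ha0 h1b, mul_nonneg (mul_nonneg ha0 hb0) (sub_nonneg.2 h),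
      mul_nonneg hb0 (sq_nonneg (1 - a))]

lemma setLIntegral_Icc_measure_le_eq {X : Type*} [MeasurableSpace X] (μ : Measure X)
    [SFinite μ] {h : X → ℝ} (hm : Measurable h) (h0 : 0 ≤ h) (ξ : ℝ) :
    ∫⁻ τ in Icc 0 ξ, μ {x | h x ≤ τ} = ∫⁻ x, ENNReal.ofReal (ξ - h x) ∂μ := by
  have hS : MeasurableSet {p : ℝ × X | h p.2 ≤ p.1} :=
    measurableSet_le (hm.comp measurable_snd) measurable_fst
  calc ∫⁻ τ in Icc 0 ξ, μ {x | h x ≤ τ}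
      = ((volume.restrict (Icc 0 ξ)).prod μ) {p : ℝ × X | h p.2 ≤ p.1} :=
        (Measure.prod_apply hS).symm
    _ = ∫⁻ x, volume (Icc (h x) ξ) ∂μ := by
        rw [Measure.prod_apply_symm hS]
        refine lintegral_congr fun x => ?_
        rw [Measure.restrict_apply' measurableSet_Icc]
        congr 1
        ext τ
        simp only [mem_inter_iff, mem_preimage, mem_Icc]
        exact ⟨fun ⟨h1, _, h3⟩ => ⟨h1, h3⟩, fun ⟨h1, h2⟩ => ⟨h1, (h0 x).trans h1, h2⟩⟩
    _ = ∫⁻ x, ENNReal.ofReal (ξ - h x) ∂μ := by simp_rw [Real.volume_Icc]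

lemma setIntegral_Icc_measureReal_le_eq {X : Type*} [MeasurableSpace X] (μ : Measure X)
    [IsFiniteMeasure μ] {h : X → ℝ} (hm : Measurable h) (h0 : 0 ≤ h) (ξ : ℝ) :
    ∫ τ in Icc 0 ξ, μ.real {x | h x ≤ τ} = ∫ x, max (ξ - h x) 0 ∂μ := by
  have hmono : Monotone fun τ => μ.real {x | h x ≤ τ} := fun s t hst =>
    measureReal_mono fun x hx => le_trans hx hst
  rw [integral_eq_lintegral_of_nonneg_ae (ae_of_all _ fun τ => measureReal_nonneg)
      hmono.measurable.aestronglyMeasurable,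
    integral_eq_lintegral_of_nonneg_ae (f := fun x => max (ξ - h x) 0)
      (ae_of_all _ fun x => le_max_right _ _)
      ((measurable_const.sub hm).max measurable_const).aestronglyMeasurable]
  simp only [measureReal_def, ENNReal.ofReal_toReal (measure_ne_top μ _),
    ENNReal.ofReal_max, ENNReal.ofReal_zero, max_eq_left zero_le]
  rw [setLIntegral_Icc_measure_le_eq μ hm h0]

lemma integral_mul_sub_sub_le_integral_max {X : Type*} [MeasurableSpace X] (μ : Measure X)
    [IsFiniteMeasure μ] {f g : X → ℝ} (hf : Measurable f) (hg : Measurable g)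
    (hf01 : ∀ x, f x ∈ Icc (0 : ℝ) 1) (hg01 : ∀ x, g x ∈ Icc (0 : ℝ) 1) {ξ : ℝ} (hξ : 0 ≤ ξ) :
    (ξ + 2) * ∫ x, f x * g x ∂μ - ∫ x, f x ∂μ - ∫ x, g x ∂μ ≤
      ∫ x, max (ξ - (1 - min (f x) (g x))) 0 ∂μ := by
  have unit_integrable {u : X → ℝ} (hu : Measurable u) (hu01 : ∀ x, u x ∈ Icc (0 : ℝ) 1) :
      Integrable u μ :=
    .of_bound hu.aestronglyMeasurable 1 <| ae_of_all _ fun x => by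
      rw [Real.norm_of_nonneg (hu01 x).1]; exact (hu01 x).2
  have hf' := unit_integrable hf hf01
  have hg' := unit_integrable hg hg01
  have hfg := unit_integrable (u := fun x => f x * g x) (hf.mul hg) fun x =>
    ⟨mul_nonneg (hf01 x).1 (hg01 x).1, mul_le_one₀ (hf01 x).2 (hg01 x).1 (hg01 x).2⟩
  have hmax : Integrable (fun x => max (ξ - (1 - min (f x) (g x))) 0) μ :=
    .of_bound ((measurable_const.sub (measurable_const.sub (hf.min hg))).max
      measurable_const).aestronglyMeasurable ξ <| ae_of_all _ fun x => by
        rw [Real.norm_of_nonneg (le_max_right _ _)]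
        exact max_le (by linarith [(min_le_left (f x) (g x)).trans (hf01 x).2]) hξ
  have hlin : ∫ x, ((ξ + 2) * (f x * g x) - f x - g x) ∂μ =
      (ξ + 2) * ∫ x, f x * g x ∂μ - ∫ x, f x ∂μ - ∫ x, g x ∂μ := by
    rw [integral_sub, integral_sub, integral_const_mul]
    exacts [hfg.const_mul _, hf', (hfg.const_mul _).sub hf', hg']
  exact hlin ▸ integral_mono (((hfg.const_mul _).sub hf').sub hg') hmax
    fun x => mul_mul_sub_sub_le_max_min hξ (hf01 x) (hg01 x)

theorem good_flower_strong_general {X : Type*} [MeasurableSpace X] (μ : Measure X)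
    [IsProbabilityMeasure μ] (Q : X → ℝ) (hQm : Measurable Q)
    (hQ01 : ∀ x, Q x ∈ Set.Icc (0 : ℝ) 1)
    (inv : X → X) (hinv : MeasurePreserving inv μ μ)
    (Δ P : ℝ) (hΔ : 1 ≤ Δ) (hP : P ∈ Set.Icc (0 : ℝ) 1)
    (h1 : ∫ x, Q x ∂μ ≤ 1 / Δ)
    (h2 : (1 - P) / Δ ≤ ∫ x, Q x * Q (inv x) ∂μ)
    (ξ : ℝ) (hξ : ξ ∈ Set.Ioo (0 : ℝ) 1) :
    (1 - 7 * P / ξ) / Δ ≤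
      (∫ τ in Set.Icc (0 : ℝ) ξ,
        (μ {x | 1 - τ ≤ Q x ∧ 1 - τ ≤ Q (inv x)}).toReal) / ξ := by
  obtain ⟨hξ0, hξ1⟩ := hξ
  have hΔ0 : 0 < Δ := by linarith
  have hQinv : Measurable fun x => Q (inv x) := hQm.comp hinv.measurable
  have hgood : ∀ τ, {x | 1 - τ ≤ Q x ∧ 1 - τ ≤ Q (inv x)} =
      {x | 1 - min (Q x) (Q (inv x)) ≤ τ} := fun τ => by
    ext x; simp only [mem_ofPred_eq, sub_le_comm, le_min_iff]
  have hlayer := setIntegral_Icc_measureReal_le_eq μ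
    (h := fun x => 1 - min (Q x) (Q (inv x))) (measurable_const.sub (hQm.min hQinv))
    (fun x => sub_nonneg.2 ((min_le_left _ _).trans (hQ01 x).2)) ξ
  have hmoment := integral_mul_sub_sub_le_integral_max μ hQm hQinv hQ01 (fun x => hQ01 (inv x))
    hξ0.le
  have hsymm : ∫ x, Q (inv x) ∂μ = ∫ x, Q x ∂μ := by
    rw [← integral_map hinv.measurable.aemeasurable hQm.aestronglyMeasurable, hinv.map_eq]
  simp_rw [← measureReal_def, hgood, hlayer]
  rw [le_div_iff₀ hξ0]
  have hslack : 0 ≤ P * (5 - ξ) / Δ := div_nonneg (mul_nonneg hP.1 (by linarith)) hΔ0.le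
  calc (1 - 7 * P / ξ) / Δ * ξ
      = (ξ + 2) * ((1 - P) / Δ) - 2 * (1 / Δ) - P * (5 - ξ) / Δ := by field_simp; ring
    _ ≤ (ξ + 2) * ∫ x, Q x * Q (inv x) ∂μ - ∫ x, Q x ∂μ - ∫ x, Q (inv x) ∂μ := by
        rw [hsymm]
        linarith [mul_le_mul_of_nonneg_left h2 (by linarith : (0 : ℝ) ≤ ξ + 2)]
    _ ≤ _ := hmoment

theorem good_flower_strong {X : Type*} [MeasurableSpace X] (μ : Measure X)
    [IsProbabilityMeasure μ] (Q : X → ℝ) (hQm : Measurable Q)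
    (hQ01 : ∀ x, Q x ∈ Set.Icc (0 : ℝ) 1)
    (inv : X → X) (hinv : MeasurePreserving inv μ μ) (hinvol : Function.Involutive inv)
    (Δ P : ℝ) (hΔ : 1 ≤ Δ) (hP : P ∈ Set.Icc (0 : ℝ) 1)
    (h1 : ∫ x, Q x ∂μ ≤ 1 / Δ)
    (h2 : (1 - P) / Δ ≤ ∫ x, Q x * Q (inv x) ∂μ)
    (ξ : ℝ) (hξ : ξ ∈ Set.Ioo (0 : ℝ) 1) :
    (1 - 7 * P / ξ) / Δ ≤
      (∫ τ in Set.Icc (0 : ℝ) ξ,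
        (μ {x | 1 - τ ≤ Q x ∧ 1 - τ ≤ Q (inv x)}).toReal) / ξ :=
  good_flower_strong_general μ Q hQm hQ01 inv hinv Δ P hΔ hP h1 h2 ξ hξ
end
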